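/- For the square-loss Lagrangian L, for every α ∈ ℝⁿ the infimum over β ∈ ℝᵖ of L(β, α) equals D(α); that is, inf_{β ∈ ℝᵖ} L(β, α) = −½‖α‖² − yᵀα + Σ_{j=1}^p Φ(x₍·j₎ᵀα). -/

import Mathlib

/-!
The Lagrangian splits as `-½‖α‖² - yᵀα + ∑ⱼ ψ(x₍·j₎ᵀα, βⱼ)` with
`ψ(t, b) = t b + λ₀ [b ≠ 0] + λ₁ |b| + λ₂ b²` (`penalty`), so its infimum over `β` is the sum of the
one-dimensional minima. On `b ≠ 0`, `ψ(t, ·)` is at least `λ₀ - (|t| - λ₁)²/(4λ₂)`, attained at the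
soft-thresholded point when `|t| > λ₁`, and at least `λ₀ - 2√(λ₀λ₂)|b| + λ₂b² ≥ 0` (AM-GM) when
`|t| ≤ 2√(λ₀λ₂) + λ₁`; comparing with `ψ(t, 0) = 0` gives `Φ(t)` as the minimum.
-/

open Finset Set

section SeparableMinimization

variable {ι κ M : Type*} [Fintype ι] [AddCommMonoid M] [PartialOrder M] [IsOrderedAddMonoid M]

theorem isLeast_range_sum_apply {f : ι → κ → M} {m : ι → M}
    (hf : ∀ i, IsLeast (range (f i)) (m i)) :
    IsLeast (range fun β : ι → κ => ∑ i, f i (β i)) (∑ i, m i) := by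
  choose β hβ using fun i => (hf i).1
  refine ⟨⟨β, Finset.sum_congr rfl fun i _ => hβ i⟩, ?_⟩
  rintro _ ⟨γ, rfl⟩
  exact Finset.sum_le_sum fun i _ => (hf i).2 ⟨γ i, rfl⟩

end SeparableMinimization

namespace L0L1L2

variable (l0 l1 l2 : ℝ)

noncomputable def penalty (t b : ℝ) : ℝ :=
  t * b + (if b ≠ 0 then l0 else 0) + l1 * |b| + l2 * b ^ 2

noncomputable def phi (t : ℝ) : ℝ :=
  if 2 * √(l0 * l2) + l1 < |t| then l0 - (|t| - l1) ^ 2 / (4 * l2) else 0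

variable {l0 l1 l2}

theorem penalty_zero (t : ℝ) : penalty l0 l1 l2 t 0 = 0 := by
  simp [penalty]

theorem phi_nonpos (hl0 : 0 < l0) (hl2 : 0 < l2) (t : ℝ) : phi l0 l1 l2 t ≤ 0 := by
  unfold phi
  split_ifs with h
  · have hs : √(l0 * l2) ^ 2 = l0 * l2 := Real.sq_sqrt (by positivity)
    rw [sub_nonpos, le_div_iff₀ (by positivity)]
    nlinarith [Real.sqrt_nonneg (l0 * l2)]
  · rfl

theorem phi_le_penalty (hl0 : 0 < l0) (hl2 : 0 < l2) (t b : ℝ) :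
    phi l0 l1 l2 t ≤ penalty l0 l1 l2 t b := by
  rcases eq_or_ne b 0 with rfl | hb
  · rw [penalty_zero]
    exact phi_nonpos hl0 hl2 t
  have htb : -(|t| * |b|) ≤ t * b := by rw [← abs_mul]; exact neg_abs_le _
  have hb2 : |b| ^ 2 = b ^ 2 := sq_abs b
  unfold phi penalty
  rw [if_pos hb]
  split_ifs with h
  · have key : |b| * (|t| - l1) - l2 * b ^ 2 ≤ (|t| - l1) ^ 2 / (4 * l2) := by
      rw [le_div_iff₀ (by positivity), ← hb2]
      nlinarith [sq_nonneg (2 * l2 * |b| - |t| + l1)]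
    linarith
  · have hs : √(l0 * l2) ^ 2 = l0 * l2 := Real.sq_sqrt (by positivity)
    have amgm : 2 * √(l0 * l2) * |b| ≤ l0 + l2 * b ^ 2 := by
      refine le_of_mul_le_mul_right ?_ hl2
      rw [← hb2]
      nlinarith [sq_nonneg (√(l0 * l2) - l2 * |b|)]
    nlinarith [mul_le_mul_of_nonneg_right (not_lt.mp h) (abs_nonneg b)]

theorem exists_penalty_eq_phi (hl2 : 0 < l2) (t : ℝ) :
    ∃ b, penalty l0 l1 l2 t b = phi l0 l1 l2 t := by
  unfold phi penalty
  by_cases h : 2 * √(l0 * l2) + l1 < |t|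
  · have hlt : l1 < |t| := by linarith [Real.sqrt_nonneg (l0 * l2)]
    rw [if_pos h]
    -- the soft-thresholding minimiser `(l1 sign t - t) / (2 l2)`
    rcases abs_cases t with ⟨he, -⟩ | ⟨he, -⟩
    · have hb : (l1 - t) / (2 * l2) < 0 := div_neg_of_neg_of_pos (by linarith) (by linarith)
      refine ⟨(l1 - t) / (2 * l2), ?_⟩
      rw [if_pos hb.ne, abs_of_neg hb, he]
      field_simp
      ring
    · have hb : 0 < (-l1 - t) / (2 * l2) := div_pos (by linarith) (by linarith)
      refine ⟨(-l1 - t) / (2 * l2), ?_⟩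
      rw [if_pos hb.ne', abs_of_pos hb, he]
      field_simp
      ring
  · exact ⟨0, by simp [h]⟩

theorem isLeast_range_penalty (hl0 : 0 < l0) (hl2 : 0 < l2) (t : ℝ) :
    IsLeast (range (penalty l0 l1 l2 t)) (phi l0 l1 l2 t) :=
  ⟨exists_penalty_eq_phi hl2 t, by rintro _ ⟨b, rfl⟩; exact phi_le_penalty hl0 hl2 t b⟩

end L0L1L2

open L0L1L2

theorem sum_mul_sum_mul_swap {m n : Type*} [Fintype m] [Fintype n]
    (X : Matrix m n ℝ) (α : m → ℝ) (β : n → ℝ) :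
    ∑ i, α i * ∑ j, X i j * β j = ∑ j, (∑ i, X i j * α i) * β j := by
  simp_rw [Finset.mul_sum, Finset.sum_mul]
  rw [Finset.sum_comm]
  exact Finset.sum_congr rfl fun _ _ => Finset.sum_congr rfl fun _ _ => by ring

theorem mul_card_filter_ne_zero {p : Type*} [Fintype p] (c : ℝ) (β : p → ℝ) :
    c * ((univ.filter fun j => β j ≠ 0).card : ℝ) = ∑ j, if β j ≠ 0 then c else 0 := by
  rw [Finset.natCast_card_filter, Finset.mul_sum]
  simp

theorem statement_4_general (l0 l1 l2 : ℝ) (hl0 : 0 < l0) (hl2 : 0 < l2)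
    (n p : ℕ) (X : Matrix (Fin n) (Fin p) ℝ) (y : Fin n → ℝ)
    (Φ : ℝ → ℝ)
    (hΦ : ∀ t : ℝ, Φ t =
      if 2 * Real.sqrt (l0 * l2) + l1 < |t| then l0 - (|t| - l1) ^ 2 / (4 * l2)
      else 0)
    (L : (Fin p → ℝ) → (Fin n → ℝ) → ℝ)
    (hL : ∀ (β : Fin p → ℝ) (α : Fin n → ℝ), L β α =
      (∑ i, α i * ∑ j, X i j * β j)
        - (1 / 2) * (∑ i, (α i) ^ 2) - (∑ i, y i * α i)
        + l0 * ((Finset.univ.filter fun j => β j ≠ 0).card : ℝ)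
        + l1 * (∑ j, |β j|)
        + l2 * (∑ j, (β j) ^ 2))
    (α : Fin n → ℝ) :
    IsGLB (Set.range fun β : Fin p → ℝ => L β α)
      (-(1 / 2) * (∑ i, (α i) ^ 2) - (∑ i, y i * α i)
        + ∑ j, Φ (∑ i, X i j * α i)) := by
  set t : Fin p → ℝ := fun j => ∑ i, X i j * α i
  set c := -(1 / 2) * (∑ i, (α i) ^ 2) - (∑ i, y i * α i)
  have hL_sep : (fun β => L β α) = (c + ·) ∘ fun β => ∑ j, penalty l0 l1 l2 (t j) (β j) := by
    ext β
    rw [hL, sum_mul_sum_mul_swap, mul_card_filter_ne_zero]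
    simp only [Function.comp_apply, penalty, t, c, Finset.sum_add_distrib, ← Finset.mul_sum]
    ring
  rw [hL_sep, Set.range_comp, show Φ = phi l0 l1 l2 from funext hΦ]
  exact (add_right_mono.map_isLeast
    (isLeast_range_sum_apply fun j => isLeast_range_penalty hl0 hl2 (t j))).isGLB

/-- For the square-loss Lagrangian L and every α ∈ ℝⁿ,
inf over β ∈ ℝᵖ of L(β, α) equals D(α) = −½‖α‖² − yᵀα + Σ_j Φ(x₍·j₎ᵀα). -/
theorem statement_4 (l0 l1 l2 : ℝ) (hl0 : 0 < l0) (hl1 : 0 < l1) (hl2 : 0 < l2)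
    (n p : ℕ) (X : Matrix (Fin n) (Fin p) ℝ) (y : Fin n → ℝ)
    (Φ : ℝ → ℝ)
    (hΦ : ∀ t : ℝ, Φ t =
      if 2 * Real.sqrt (l0 * l2) + l1 < |t| then l0 - (|t| - l1) ^ 2 / (4 * l2)
      else 0)
    (L : (Fin p → ℝ) → (Fin n → ℝ) → ℝ)
    (hL : ∀ (β : Fin p → ℝ) (α : Fin n → ℝ), L β α =
      (∑ i, α i * ∑ j, X i j * β j)
        - (1 / 2) * (∑ i, (α i) ^ 2) - (∑ i, y i * α i)
        + l0 * ((Finset.univ.filter fun j => β j ≠ 0).card : ℝ)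
        + l1 * (∑ j, |β j|)
        + l2 * (∑ j, (β j) ^ 2))
    (α : Fin n → ℝ) :
    IsGLB (Set.range fun β : Fin p → ℝ => L β α)
      (-(1 / 2) * (∑ i, (α i) ^ 2) - (∑ i, y i * α i)
        + ∑ j, Φ (∑ i, X i j * α i)) :=
  statement_4_general l0 l1 l2 hl0 hl2 n p X y Φ hΦ L hL α
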